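/- For integers n ≥ 1 and h ≥ 1, the number of Dyck paths of length 2n that reach height at least h equals the sum over k ≥ 1 of (binomial(2n, n - k(h+1) - 1) - 2·binomial(2n, n - k(h+1)) + binomial(2n, n - k(h+1) + 1)). -/

import Mathlib

open Finset

/-- The height of the lattice path with step sequence `s` (true = up-step (1,1),
false = down-step (1,-1)) after `i` steps. -/
def pathHt {m : ℕ} (s : Fin m → Bool) (i : ℕ) : ℤ :=
  ∑ j ∈ Finset.univ.filter (fun j : Fin m => (j : ℕ) < i), (if s j then (1 : ℤ) else -1)

/-- Binomial coefficient `n` choose `j` for an integer lower index `j`,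
equal to `0` when `j < 0` or `j > n`. -/
def intChoose (n : ℕ) (j : ℤ) : ℤ :=
  if 0 ≤ j then (n.choose j.toNat : ℤ) else 0

/-!
A Dyck path of length `2n` reaches height `h` exactly when it does not stay in the strip
`0 ≤ y ≤ h - 1`, so the count is a difference of two strip counts. By the method of images, the
number of `±1` paths of length `m` from `0` to `a` inside the strip `0 ≤ y ≤ H` is
`∑ₖ (N(a + 2kp) - N(-2 - a + 2kp))` with `p = H + 2`, where `N(b)` counts unconstrained paths
ending at `b`: both sides satisfy the same Pascal recursion in `m`, and the sum vanishes on the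
lines `y = -1` and `y = H + 1`. For endpoint `0` and length `2n`, the symmetry of binomial
coefficients merges the terms `k` and `-k` into second differences of the central binomial row;
for the strip `H = 2n`, which contains every Dyck path, only the term `k = 0` survives.
-/

@[simp]
lemma intChoose_natCast (m k : ℕ) : intChoose m k = m.choose k := by
  simp [intChoose]

lemma intChoose_eq_zero_of_neg {m : ℕ} {j : ℤ} (hj : j < 0) : intChoose m j = 0 := by
  simp [intChoose, hj.not_ge]

lemma intChoose_eq_zero_of_lt {m : ℕ} {j : ℤ} (hj : m < j) : intChoose m j = 0 := by
  lift j to ℕ using by omega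
  simp [Nat.choose_eq_zero_of_lt (by exact_mod_cast hj : m < j)]

lemma intChoose_succ (m : ℕ) (j : ℤ) :
    intChoose (m + 1) j = intChoose m j + intChoose m (j - 1) := by
  rcases lt_trichotomy j 0 with hj | rfl | hj
  · simp [intChoose_eq_zero_of_neg, hj, hj.trans (by norm_num : (0 : ℤ) < 1)]
  · simp [intChoose]
  · obtain ⟨t, rfl⟩ : ∃ t : ℕ, j = (t + 1 : ℕ) := ⟨(j - 1).toNat, by omega⟩
    rw [Nat.cast_succ, add_sub_cancel_right, ← Nat.cast_succ, intChoose_natCast,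
      intChoose_natCast, intChoose_natCast, Nat.choose_succ_succ', Nat.cast_add, add_comm]

lemma intChoose_symm (m : ℕ) (j : ℤ) : intChoose m j = intChoose m (m - j) := by
  rcases lt_or_ge j 0 with hj | hj
  · rw [intChoose_eq_zero_of_neg hj, intChoose_eq_zero_of_lt (by omega)]
  rcases lt_or_ge (m : ℤ) j with hm | hm
  · rw [intChoose_eq_zero_of_lt hm, intChoose_eq_zero_of_neg (by omega)]
  lift j to ℕ using hj
  have hjm : j ≤ m := by exact_mod_cast hm
  rw [← Nat.cast_sub hjm, intChoose_natCast, intChoose_natCast, Nat.choose_symm hjm]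

def walkCount (m : ℕ) (b : ℤ) : ℤ :=
  if 2 ∣ m + b then intChoose m ((m + b) / 2) else 0

lemma walkCount_zero (b : ℤ) : walkCount 0 b = if b = 0 then 1 else 0 := by
  rcases eq_or_ne b 0 with rfl | hb
  · simp [walkCount, intChoose]
  rw [walkCount, if_neg hb]
  split_ifs with h2
  · rcases lt_or_gt_of_ne hb with hb | hb
    · exact intChoose_eq_zero_of_neg (by omega)
    · exact intChoose_eq_zero_of_lt (by omega)
  · rfl

lemma walkCount_succ (m : ℕ) (b : ℤ) :
    walkCount (m + 1) b = walkCount m (b - 1) + walkCount m (b + 1) := by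
  simp only [walkCount, Nat.cast_succ]
  by_cases hb : 2 ∣ (m : ℤ) + 1 + b
  · rw [if_pos hb, if_pos (by omega), if_pos (by omega), add_comm (intChoose _ _),
      intChoose_succ]
    congr 2 <;> omega
  · rw [if_neg hb, if_neg (by omega), if_neg (by omega), add_zero]

lemma walkCount_eq_zero {m : ℕ} {b : ℤ} (hb : m < |b|) : walkCount m b = 0 := by
  rw [walkCount]
  split_ifs
  · rcases lt_abs.mp hb with hb | hb
    · exact intChoose_eq_zero_of_lt (by omega)
    · exact intChoose_eq_zero_of_neg (by omega)
  · rfl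

lemma walkCount_two_mul (n : ℕ) (c : ℤ) :
    walkCount (2 * n) (2 * c) = intChoose (2 * n) (n + c) := by
  rw [walkCount, if_pos ⟨n + c, by push_cast; ring⟩]
  congr 1
  push_cast
  omega

lemma Finset.sum_Icc_sub_pred {M : Type*} [AddCommGroup M] (g : ℤ → M) {a b : ℤ}
    (hab : a - 1 ≤ b) : ∑ k ∈ Icc a b, (g k - g (k - 1)) = g b - g (a - 1) := by
  induction b, hab using Int.leInduction with
  | base => simp
  | succ b hab ih =>
    rw [← insert_Icc_right_eq_Icc_add_one (by omega), sum_insert (by simp), ih,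
      add_sub_cancel_right]
    abel

lemma Finset.sum_Icc_neg_natCast {M : Type*} [AddCommMonoid M] (f : ℤ → M) (K : ℕ) :
    ∑ k ∈ Icc (-K : ℤ) K, f k = f 0 + ∑ k ∈ range K, (f (k + 1) + f (-(k + 1))) := by
  induction K with
  | zero => simp
  | succ K ih =>
    rw [sum_range_succ, ← add_assoc, ← ih, Nat.cast_succ,
      ← insert_Icc_right_eq_Icc_add_one (by omega), sum_insert (by simp),
      show -((K : ℤ) + 1) = -K - 1 by ring, ← insert_Icc_left_eq_Icc_sub_one (by omega),
      sum_insert (by simp)]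
    abel

noncomputable def reflectionSum (p : ℤ) (K m : ℕ) (a : ℤ) : ℤ :=
  ∑ k ∈ Icc (-K : ℤ) K, (walkCount m (a + 2 * k * p) - walkCount m (-2 - a + 2 * k * p))

lemma reflectionSum_succ (p : ℤ) (K m : ℕ) (a : ℤ) :
    reflectionSum p K (m + 1) a = reflectionSum p K m (a - 1) + reflectionSum p K m (a + 1) := by
  simp only [reflectionSum, ← sum_add_distrib, walkCount_succ]
  refine sum_congr rfl fun k _ => ?_
  ring_nf

lemma reflectionSum_neg_one (p : ℤ) (K m : ℕ) : reflectionSum p K m (-1) = 0 :=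
  sum_eq_zero fun k _ => by ring_nf

lemma reflectionSum_sub_one {p : ℤ} (hp : 2 ≤ p) {K m : ℕ} (hm : m ≤ K) :
    reflectionSum p K m (p - 1) = 0 := by
  have hK : (m : ℤ) ≤ K := by exact_mod_cast hm
  -- the reflected term for `k` is the direct term for `k - 1`
  calc reflectionSum p K m (p - 1)
      = ∑ k ∈ Icc (-K : ℤ) K,
          (walkCount m (p - 1 + 2 * k * p) - walkCount m (p - 1 + 2 * (k - 1) * p)) :=
        sum_congr rfl fun k _ => by ring_nf
    _ = walkCount m (p - 1 + 2 * K * p) - walkCount m (p - 1 + 2 * (-K - 1) * p) :=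
        sum_Icc_sub_pred (fun k : ℤ => walkCount m (p - 1 + 2 * k * p)) (by omega)
    _ = 0 := by
        rw [walkCount_eq_zero (by rw [lt_abs]; left; nlinarith),
          walkCount_eq_zero (by rw [lt_abs]; right; nlinarith), sub_zero]

lemma reflectionSum_zero {p : ℤ} (hp : 2 ≤ p) (K : ℕ) {a : ℤ} (ha : -1 ≤ a)
    (ha' : a ≤ p - 1) :
    reflectionSum p K 0 a = if a = 0 then 1 else 0 := by
  rw [reflectionSum, sum_eq_single_of_mem 0 (by simp)]
  · simp only [walkCount_zero]
    split_ifs <;> omega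
  · intro k _ hk
    rw [walkCount_zero, walkCount_zero, if_neg, if_neg, sub_zero]
    · rcases lt_or_gt_of_ne hk with hk | hk <;> nlinarith
    · rcases lt_or_gt_of_ne hk with hk | hk <;> nlinarith

lemma pathHt_le {m : ℕ} (s : Fin m → Bool) (i : ℕ) : pathHt s i ≤ m := by
  calc pathHt s i ≤ #(univ.filter fun j : Fin m => (j : ℕ) < i) • (1 : ℤ) :=
        sum_le_card_nsmul _ _ _ fun j _ => by split_ifs <;> norm_num
    _ ≤ m := by simpa using card_filter_le (univ : Finset (Fin m)) _

lemma pathHt_snoc {m : ℕ} (t : Fin m → Bool) (b : Bool) (i : ℕ) :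
    pathHt (Fin.snoc t b) i = pathHt t i + if m < i then (if b then 1 else -1) else 0 := by
  simp only [pathHt, sum_filter, Fin.sum_univ_castSucc, Fin.val_castSucc, Fin.snoc_castSucc,
    Fin.val_last, Fin.snoc_last]

lemma pathHt_of_le {m : ℕ} (s : Fin m → Bool) {i : ℕ} (hi : m ≤ i) :
    pathHt s i = pathHt s m :=
  sum_congr (filter_congr fun j _ => by omega) fun _ _ => rfl

def stripPaths (H : ℤ) (m : ℕ) (a : ℤ) : Finset (Fin m → Bool) :=
  univ.filter fun s => pathHt s m = a ∧ ∀ i ≤ m, 0 ≤ pathHt s i ∧ pathHt s i ≤ H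

lemma stripPaths_subset_self (H : ℤ) (m : ℕ) (a : ℤ) :
    stripPaths H m a ⊆ stripPaths m m a := fun s hs => by
  simp only [stripPaths, mem_filter] at hs ⊢
  exact ⟨hs.1, hs.2.1, fun i hi => ⟨(hs.2.2 i hi).1, pathHt_le s i⟩⟩

lemma card_stripPaths_zero {H : ℤ} (hH : 0 ≤ H) (a : ℤ) :
    #(stripPaths H 0 a) = if a = 0 then 1 else 0 := by
  have hzero (s : Fin 0 → Bool) (i : ℕ) : pathHt s i = 0 := by simp [pathHt]
  split_ifs with ha
  · rw [stripPaths, filter_true_of_mem fun s _ => by simp [hzero, ha, hH], card_univ,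
      Fintype.card_unique]
  · exact card_eq_zero.mpr (filter_eq_empty_iff.mpr fun s _ hs => ha (by rw [← hs.1, hzero]))

lemma snoc_mem_stripPaths {H : ℤ} {m : ℕ} {a : ℤ} (t : Fin m → Bool) (b : Bool) :
    Fin.snoc t b ∈ stripPaths H (m + 1) a ↔
      (0 ≤ a ∧ a ≤ H) ∧ t ∈ stripPaths H m (a - if b then 1 else -1) := by
  have hinit (i : ℕ) (hi : i ≤ m) : pathHt (Fin.snoc t b) i = pathHt t i := by
    rw [pathHt_snoc, if_neg (by omega), add_zero]
  have hlast : pathHt (Fin.snoc t b) (m + 1) = pathHt t m + if b then 1 else -1 := by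
    rw [pathHt_snoc, if_pos (by omega), pathHt_of_le t (by omega)]
  simp only [stripPaths, mem_filter, mem_univ, true_and, hlast, eq_sub_iff_add_eq]
  constructor
  · rintro ⟨rfl, hstrip⟩
    refine ⟨hstrip (m + 1) le_rfl |>.imp (by rwa [hlast] at ·) (by rwa [hlast] at ·),
      rfl, fun i hi => ?_⟩
    rw [← hinit i hi]
    exact hstrip i (by omega)
  · rintro ⟨ha, rfl, hstrip⟩
    refine ⟨rfl, fun i hi => ?_⟩
    rcases Nat.lt_or_ge i (m + 1) with hi' | hi'
    · rw [hinit i (by omega)]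
      exact hstrip i (by omega)
    · rw [show i = m + 1 by omega, hlast]
      exact ha

lemma card_stripPaths_succ (H : ℤ) (m : ℕ) (a : ℤ) :
    #(stripPaths H (m + 1) a) =
      if 0 ≤ a ∧ a ≤ H then #(stripPaths H m (a - 1)) + #(stripPaths H m (a + 1)) else 0 := by
  classical
  calc #(stripPaths H (m + 1) a)
      = ∑ s : Fin (m + 1) → Bool, if s ∈ stripPaths H (m + 1) a then 1 else 0 := by simp
    _ = ∑ x : Bool × (Fin m → Bool),
          if Fin.snoc x.2 x.1 ∈ stripPaths H (m + 1) a then 1 else 0 :=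
        (Fintype.sum_equiv (Fin.snocEquiv fun _ => Bool) _ _ fun _ => rfl).symm
    _ = _ := by
        simp only [Fintype.sum_prod_type, Fintype.sum_bool, snoc_mem_stripPaths]
        by_cases ha : 0 ≤ a ∧ a ≤ H <;> simp [ha]

theorem card_stripPaths_eq_reflectionSum {H : ℤ} (hH : 0 ≤ H) {K m : ℕ} (hm : m ≤ K)
    {a : ℤ} (ha : -1 ≤ a) (ha' : a ≤ H + 1) :
    #(stripPaths H m a) = reflectionSum (H + 2) K m a := by
  induction m generalizing a with
  | zero =>
    rw [card_stripPaths_zero hH, reflectionSum_zero (by omega) K ha (by omega)]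
    push_cast; rfl
  | succ m ih =>
    rw [card_stripPaths_succ]
    split_ifs with hstrip
    · rw [reflectionSum_succ, Nat.cast_add, ih (by omega) (by omega) (by omega),
        ih (by omega) (by omega) (by omega)]
    · rcases (show a = -1 ∨ a = H + 2 - 1 by omega) with rfl | rfl
      · rw [reflectionSum_neg_one, Nat.cast_zero]
      · rw [reflectionSum_sub_one (by omega) hm, Nat.cast_zero]

def centralSecondDiff (n : ℕ) (c : ℤ) : ℤ :=
  intChoose (2 * n) (n - c - 1) - 2 * intChoose (2 * n) (n - c) + intChoose (2 * n) (n - c + 1)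

lemma centralSecondDiff_eq_zero {n : ℕ} {c : ℤ} (hc : n + 2 ≤ c) :
    centralSecondDiff n c = 0 := by
  simp only [centralSecondDiff, intChoose_eq_zero_of_neg (by omega : (n : ℤ) - c - 1 < 0),
    intChoose_eq_zero_of_neg (by omega : (n : ℤ) - c < 0),
    intChoose_eq_zero_of_neg (by omega : (n : ℤ) - c + 1 < 0)]
  ring

lemma reflectionSum_two_mul_zero (p : ℤ) (K n : ℕ) :
    reflectionSum p K (2 * n) 0 = intChoose (2 * n) n - intChoose (2 * n) (n - 1)
      - ∑ k ∈ range K, centralSecondDiff n ((k + 1) * p) := by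
  have hterm (c : ℤ) : walkCount (2 * n) (0 + 2 * c) - walkCount (2 * n) (-2 - 0 + 2 * c)
      = intChoose (2 * n) (n + c) - intChoose (2 * n) (n + c - 1) := by
    rw [zero_add, show -2 - 0 + 2 * c = 2 * (c - 1) by ring, walkCount_two_mul,
      walkCount_two_mul, add_sub_assoc]
  have hsymm (c : ℤ) : intChoose (2 * n) (n + c) = intChoose (2 * n) (n - c) := by
    rw [intChoose_symm]; congr 1; push_cast; ring
  have hpair (c : ℤ) : intChoose (2 * n) (n + c) - intChoose (2 * n) (n + c - 1)
      + (intChoose (2 * n) (n + -c) - intChoose (2 * n) (n + -c - 1))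
      = -centralSecondDiff n c := by
    rw [centralSecondDiff, hsymm, add_sub_assoc, hsymm, ← sub_eq_add_neg,
      show (n : ℤ) - (c - 1) = n - c + 1 by ring]
    ring
  rw [reflectionSum, sum_Icc_neg_natCast]
  simp only [mul_assoc, hterm, neg_mul, hpair, sum_neg_distrib]
  simp [sub_eq_add_neg]

lemma card_stripPaths_two_mul {H : ℤ} (hH : 0 ≤ H) (n : ℕ) :
    (#(stripPaths H (2 * n) 0) : ℤ) = intChoose (2 * n) n - intChoose (2 * n) (n - 1)
      - ∑ k ∈ range (2 * n), centralSecondDiff n ((k + 1) * (H + 2)) := by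
  rw [card_stripPaths_eq_reflectionSum hH le_rfl (by norm_num) (by omega),
    reflectionSum_two_mul_zero]

lemma filter_reachingHeight_eq_sdiff (m : ℕ) (h : ℤ) :
    univ.filter (fun s : Fin m → Bool => pathHt s m = 0 ∧ (∀ i ≤ m, 0 ≤ pathHt s i) ∧
        ∃ i ≤ m, h ≤ pathHt s i) = stripPaths m m 0 \ stripPaths (h - 1) m 0 := by
  ext s
  simp only [stripPaths, mem_sdiff, mem_filter, mem_univ, true_and, not_and, not_forall]
  constructor
  · rintro ⟨hend, hpos, i, hi, hreach⟩
    exact ⟨⟨hend, fun j hj => ⟨hpos j hj, pathHt_le s j⟩⟩,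
      fun _ => ⟨i, hi, fun _ => by omega⟩⟩
  · rintro ⟨⟨hend, hstrip⟩, hhigh⟩
    obtain ⟨i, hi, hreach⟩ := hhigh hend
    exact ⟨hend, fun j hj => (hstrip j hj).1, i, hi, by have := hreach (hstrip i hi).1; omega⟩

theorem dyck_paths_reaching_height_card_general (n h : ℕ) (hh : 1 ≤ h) :
    ((Finset.univ.filter (fun s : Fin (2 * n) → Bool =>
        pathHt s (2 * n) = 0 ∧ (∀ i ≤ 2 * n, 0 ≤ pathHt s i) ∧
        ∃ i ≤ 2 * n, (h : ℤ) ≤ pathHt s i)).card : ℤ)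
      = ∑' k : ℕ,
          (intChoose (2 * n) ((n : ℤ) - (k + 1) * (h + 1) - 1)
            - 2 * intChoose (2 * n) ((n : ℤ) - (k + 1) * (h + 1))
            + intChoose (2 * n) ((n : ℤ) - (k + 1) * (h + 1) + 1)) := by
  have hdyck : ∑ k ∈ range (2 * n), centralSecondDiff n ((k + 1) * ((2 * n : ℕ) + 2)) = 0 :=
    sum_eq_zero fun k _ => centralSecondDiff_eq_zero (by push_cast; nlinarith)
  have htail (k : ℕ) (hk : k ∉ range (2 * n)) : centralSecondDiff n ((k + 1) * (h + 1)) = 0 :=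
    centralSecondDiff_eq_zero (by simp only [mem_range, not_lt] at hk; nlinarith)
  change _ = ∑' k : ℕ, centralSecondDiff n ((k + 1) * (h + 1))
  rw [filter_reachingHeight_eq_sdiff, cast_card_sdiff (stripPaths_subset_self _ _ _),
    card_stripPaths_two_mul (by positivity), card_stripPaths_two_mul (by omega), hdyck,
    tsum_eq_sum htail, show (h : ℤ) - 1 + 2 = h + 1 by ring]
  ring

/-- The number of Dyck paths of length `2n` reaching height at least `h`. -/
theorem dyck_paths_reaching_height_card (n h : ℕ) (hn : 1 ≤ n) (hh : 1 ≤ h) :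
    ((Finset.univ.filter (fun s : Fin (2 * n) → Bool =>
        pathHt s (2 * n) = 0 ∧ (∀ i ≤ 2 * n, 0 ≤ pathHt s i) ∧
        ∃ i ≤ 2 * n, (h : ℤ) ≤ pathHt s i)).card : ℤ)
      = ∑' k : ℕ,
          (intChoose (2 * n) ((n : ℤ) - (k + 1) * (h + 1) - 1)
            - 2 * intChoose (2 * n) ((n : ℤ) - (k + 1) * (h + 1))
            + intChoose (2 * n) ((n : ℤ) - (k + 1) * (h + 1) + 1)) :=
  dyck_paths_reaching_height_card_general n h hh
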